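/- On the polynomial algebra ℂ[x_1,x_2,x_3,x_4], define linear operators φ_1 = ∂/∂x_1, φ_2 = ∂/∂x_2, φ_3 = (multiplication by x_3), φ_4 = (multiplication by x_4), and φ̃¹ = (multiplication by x_1), φ̃² = (multiplication by x_2), φ̃³ = −∂/∂x_3, φ̃⁴ = −∂/∂x_4. Set E^i_j = φ̃^i ∘ φ_j and ⟨E⟩ = Σ_{c=1}^4 E^c_c. Then for all i,j ∈ {1,…,4}, Σ_{k=1}^4 E^i_k ∘ E^k_j = E^i_j ∘ (⟨E⟩ + 3·id) as linear operators on ℂ[x_1,x_2,x_3,x_4]; that is, the bosonic oscillator realization of u(2,2) satisfies the quadratic characteristic identity E(E − (⟨E⟩ + 3)) = 0 characteristic of massless representations. -/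

import Mathlib

open scoped BigOperators

/-- The bosonic oscillator operators `φ = (∂/∂x₁, ∂/∂x₂, x₃·, x₄·)` on
`ℂ[x₁,x₂,x₃,x₄]`. -/
noncomputable def bosPhi : Fin 4 → Module.End ℂ (MvPolynomial (Fin 4) ℂ) :=
  ![(MvPolynomial.pderiv 0).toLinearMap, (MvPolynomial.pderiv 1).toLinearMap,
    LinearMap.mulLeft ℂ (MvPolynomial.X 2), LinearMap.mulLeft ℂ (MvPolynomial.X 3)]

/-- The bosonic oscillator operators `φ̃ = (x₁·, x₂·, −∂/∂x₃, −∂/∂x₄)` on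
`ℂ[x₁,x₂,x₃,x₄]`. -/
noncomputable def bosPhiT : Fin 4 → Module.End ℂ (MvPolynomial (Fin 4) ℂ) :=
  ![LinearMap.mulLeft ℂ (MvPolynomial.X 0), LinearMap.mulLeft ℂ (MvPolynomial.X 1),
    -(MvPolynomial.pderiv 2).toLinearMap, -(MvPolynomial.pderiv 3).toLinearMap]

/-- The bosonic oscillator realization `E^i_j = φ̃^i ∘ φ_j` of `u(2,2)`. -/
noncomputable def bosE (i j : Fin 4) : Module.End ℂ (MvPolynomial (Fin 4) ℂ) :=
  bosPhiT i * bosPhi j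

/-- The linear Casimir `⟨E⟩ = Σ_c E^c_c`. -/
noncomputable def bosTrE : Module.End ℂ (MvPolynomial (Fin 4) ℂ) :=
  ∑ c : Fin 4, bosE c c

/-!
If operators `a_i`, `b_i` satisfy the canonical commutation relations `a_i b_j = b_j a_i + δ_ij`
and the `a_i` commute, put `E_ij = b_i a_j` and `N = Σ_c b_c a_c`. Then
`Σ_k E_ik E_kj = b_i (Σ_k a_k b_k) a_j = b_i (N + n) a_j`, while `a_j N = (N + 1) a_j` gives
`E_ij (N + n - 1) = b_i (N + 1) a_j + (n - 1) E_ij`, which is the same operator. The oscillators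
`φ`, `φ̃` on `ℂ[x₁,x₂,x₃,x₄]` are such a system with `n = 4`.
-/

section CanonicalCommutation

variable {A ι : Type*} [Ring A] [Fintype ι] [DecidableEq ι] (a b : ι → A)

theorem sum_mul_eq_sum_mul_add_card
    (hab : ∀ i j, a i * b j = b j * a i + if i = j then 1 else 0) :
    ∑ k, a k * b k = ∑ k, b k * a k + Fintype.card ι := by
  simp [hab, Finset.sum_add_distrib]

theorem mul_sum_mul_eq_add_one_mul
    (hab : ∀ i j, a i * b j = b j * a i + if i = j then 1 else 0)
    (haa : ∀ i j, Commute (a i) (a j)) (j : ι) :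
    a j * ∑ c, b c * a c = (∑ c, b c * a c + 1) * a j := by
  have h c : a j * (b c * a c) = b c * a c * a j + if j = c then a c else 0 := by
    rw [← mul_assoc, hab, add_mul, mul_assoc, (haa j c).eq, ← mul_assoc, ite_mul, one_mul,
      zero_mul]
  simp [Finset.mul_sum, Finset.sum_mul, h, Finset.sum_add_distrib, add_mul]

theorem sum_mul_eq_mul_sum_add_card_sub_one
    (hab : ∀ i j, a i * b j = b j * a i + if i = j then 1 else 0)
    (haa : ∀ i j, Commute (a i) (a j)) (i j : ι) :
    ∑ k, (b i * a k) * (b k * a j) =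
      (b i * a j) * (∑ c, b c * a c + (Fintype.card ι - 1 : A)) := by
  calc ∑ k, (b i * a k) * (b k * a j) = b i * (∑ k, a k * b k) * a j := by
        simp only [Finset.mul_sum, Finset.sum_mul, mul_assoc]
    _ = b i * (a j * ∑ c, b c * a c) + (b i * a j) * (Fintype.card ι - 1 : A) := by
        rw [sum_mul_eq_sum_mul_add_card a b hab, mul_sum_mul_eq_add_one_mul a b hab haa]
        simp only [mul_add, add_mul, mul_sub, mul_one, one_mul, mul_assoc, Nat.cast_comm]
        abel
    _ = _ := by rw [mul_add, ← mul_assoc]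

end CanonicalCommutation

theorem MvPolynomial.pderiv_pderiv_comm {σ R : Type*} [CommRing R] (i j : σ)
    (p : MvPolynomial σ R) : pderiv i (pderiv j p) = pderiv j (pderiv i p) := by
  classical
  -- the commutator is a derivation vanishing on every variable
  have h : ⁅pderiv (R := R) i, pderiv j⁆ = 0 := derivation_ext fun k => by
    rw [Derivation.commutator_apply]
    simp only [pderiv_X, Pi.single_apply]
    split_ifs <;> simp
  simpa [Derivation.commutator_apply, sub_eq_zero] using congr($h p)

open MvPolynomial in
theorem bosPhi_mul_bosPhiT (i j : Fin 4) :
    bosPhi i * bosPhiT j = bosPhiT j * bosPhi i + if i = j then 1 else 0 := by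
  fin_cases i <;> fin_cases j <;> refine LinearMap.ext fun p => ?_ <;>
    simp [bosPhi, bosPhiT, pderiv_pderiv_comm, mul_left_comm]

open MvPolynomial in
theorem commute_bosPhi (i j : Fin 4) : Commute (bosPhi i) (bosPhi j) := by
  fin_cases i <;> fin_cases j <;> refine LinearMap.ext fun p => ?_ <;>
    simp [bosPhi, pderiv_pderiv_comm, mul_left_comm]

/-- The bosonic oscillator realization of `u(2,2)` satisfies the quadratic
characteristic identity `E(E − (⟨E⟩ + 3)) = 0` of massless representations:
entrywise, `Σ_k E^i_k ∘ E^k_j = E^i_j ∘ (⟨E⟩ + 3·id)`. -/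
theorem bosonic_quadratic_identity (i j : Fin 4) :
    ∑ k : Fin 4, bosE i k * bosE k j =
      bosE i j * (bosTrE + 3 • (1 : Module.End ℂ (MvPolynomial (Fin 4) ℂ))) := by
  simp only [bosE, bosTrE]
  rw [sum_mul_eq_mul_sum_add_card_sub_one bosPhi bosPhiT bosPhi_mul_bosPhiT commute_bosPhi,
    Fintype.card_fin]
  norm_num
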